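/- arXiv:1904.08371 — 2 statements merged into one kernel-verified Lean document; each statement's English description precedes it below -/
import Mathlib

section
/- Let k be a field of characteristic p > 0, n ≥ 1, A = k[[u₁,…,uₙ]], and let G be a finite p-group of k-algebra automorphisms of A. Then A contains a regular system of parameters that is admissible with respect to the G-action. -/
/-
The action of `G` on `A` induces a linear action on the cotangent space `m/m²`, a `k`-vector space
of dimension at most `n` because the residue field is `k`. A finite `p`-group acting linearly on a
nonzero vector space in characteristic `p` fixes a nonzero vector (count fixed points modulo `p` on
a finite stable subgroup), so by induction on the dimension there is a spanning family `w` with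
`σ wᵢ - wᵢ ∈ span (w_j, j < i)` for all `σ ∈ G`. Any family `σᵢ wᵢ` then still spans, and lifting
`w` to `m` gives, by Nakayama, a regular system of parameters `v` such that every `σᵢ vᵢ` again
generates `m`.
-/

open Set Submodule

theorem Submodule.span_range_le_of_sub_mem_span_Iio {R M ι : Type*} [Ring R]
    [AddCommGroup M] [Module R M] [Preorder ι] [WellFoundedLT ι] {u w : ι → M}
    (h : ∀ i, u i - w i ∈ span R (w '' Iio i)) : span R (range w) ≤ span R (range u) := by
  rw [span_le]
  rintro _ ⟨i, rfl⟩
  induction i using WellFoundedLT.induction with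
  | _ i ih =>
    have hlt : span R (w '' Iio i) ≤ span R (range u) :=
      span_le.2 (by rintro _ ⟨j, hj, rfl⟩; exact ih j hj)
    simpa using sub_mem (subset_span ⟨i, rfl⟩ : u i ∈ span R (range u)) (hlt (h i))

namespace Representation

variable {k G V : Type*} [Field k] [Group G] [AddCommGroup V] [Module k V]

theorem invariants_ne_bot_of_isPGroup {p : ℕ} [Fact p.Prime] [CharP k p] [Finite G]
    (hG : IsPGroup p G) (ρ : Representation k G V) [Nontrivial V] : ρ.invariants ≠ ⊥ := by
  obtain ⟨v, hv⟩ := exists_ne (0 : V)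
  let _ : Module (ZMod p) V := Module.compHom V (ZMod.castHom dvd_rfl k)
  let W := span (ZMod p) (range fun g => ρ g v)
  have hW (g : G) (x : V) (hx : x ∈ W) : ρ g x ∈ W := by
    induction hx using span_induction with
    | mem _ hx => obtain ⟨h, rfl⟩ := hx; exact subset_span ⟨g * h, by simp⟩
    | zero => simp
    | add x y _ _ hx hy => simpa using add_mem hx hy
    | smul c x _ hx => exact (map_smul (ρ g) (ZMod.castHom dvd_rfl k c) x).symm ▸ W.smul_mem c hx
  let _ : MulAction G W :=
    { smul g x := ⟨ρ g x, hW g x x.2⟩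
      one_smul x := Subtype.ext (show ρ 1 x = x by simp)
      mul_smul g h x := Subtype.ext (show ρ (g * h) x = ρ g (ρ h x) by simp) }
  have : FiniteDimensional (ZMod p) W := FiniteDimensional.span_of_finite _ (finite_range _)
  have : Finite W := Module.finite_of_finite (ZMod p)
  let v' : W := ⟨v, subset_span ⟨1, by simp⟩⟩
  have hp : p ∣ Nat.card W := by
    have hv' : v' ≠ 0 := by simpa [v', Subtype.ext_iff] using hv
    have hord : addOrderOf v' = p :=
      addOrderOf_eq_prime (by simp [← Nat.cast_smul_eq_nsmul (ZMod p)]) hv'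
    simpa only [hord] using addOrderOf_dvd_natCard v'
  obtain ⟨w, hw, hne⟩ := hG.exists_fixed_point_of_prime_dvd_card_of_fixed_point W hp
    (a := 0) fun g => Subtype.ext (show ρ g 0 = 0 from map_zero _)
  rw [Submodule.ne_bot_iff]
  exact ⟨w, fun g => congrArg Subtype.val (hw g), fun h => hne (Subtype.ext h.symm)⟩

theorem exists_spanning_family_sub_mem_span_Iio {p : ℕ} [Fact p.Prime] [CharP k p] [Finite G]
    (hG : IsPGroup p G) (m : ℕ) (ρ : Representation k G V) [FiniteDimensional k V]
    (hV : Module.finrank k V ≤ m) :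
    ∃ w : Fin m → V, span k (range w) = ⊤ ∧ ∀ g i, ρ g (w i) - w i ∈ span k (w '' Iio i) := by
  induction m generalizing V with
  | zero =>
    have : Subsingleton V := (Module.finrank_zero_iff (R := k)).mp (by omega)
    exact ⟨0, Subsingleton.elim _ _, fun _ i => i.elim0⟩
  | succ m ih =>
    rcases subsingleton_or_nontrivial V with _ | _
    · exact ⟨0, Subsingleton.elim _ _, fun _ _ => by simp [Subsingleton.elim _ (0 : V)]⟩
    obtain ⟨w₀, hw₀, hw₀_ne⟩ := (Submodule.ne_bot_iff _).1 (invariants_ne_bot_of_isPGroup hG ρ)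
    rw [mem_invariants] at hw₀
    set S := k ∙ w₀
    have hS (g : G) : S ≤ S.comap (ρ g) :=
      (span_singleton_le_iff_mem _ _).2 (by simp [S, hw₀ g, mem_span_singleton_self])
    have hQ : Module.finrank k (V ⧸ S) ≤ m := by
      have := S.finrank_quotient_add_finrank
      rw [finrank_span_singleton hw₀_ne] at this
      omega
    obtain ⟨w', hw'_top, hw'⟩ := ih (ρ.quotient S hS) hQ
    choose u hu using fun i => S.mkQ_surjective (w' i)
    set w : Fin (m + 1) → V := Fin.cons w₀ u
    have hw'_eq : w' = S.mkQ ∘ u := funext fun i => (hu i).symm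
    refine ⟨w, ?_, fun g i => ?_⟩
    · rw [Fin.range_cons, span_insert, ← map_mkQ_eq_top, map_span, ← range_comp, ← hw'_eq,
        hw'_top]
    induction i using Fin.cases with
    | zero => simp [w, hw₀ g]
    | succ j =>
      have hmk : S.mkQ (ρ g (u j) - u j) ∈ (span k (u '' Iio j)).map S.mkQ := by
        rw [map_span, ← image_comp, ← hw'_eq]
        convert hw' g j using 1
        simp [← hu j]
      rw [← mem_comap, comap_map_mkQ] at hmk
      have hle : S ⊔ span k (u '' Iio j) ≤ span k (w '' Iio j.succ) := by
        refine sup_le ((span_singleton_le_iff_mem _ _).2 (subset_span ⟨0, j.succ_pos, rfl⟩))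
          (span_mono ?_)
        rintro _ ⟨l, hl, rfl⟩
        exact ⟨l.succ, Fin.succ_lt_succ_iff.2 hl, rfl⟩
      simpa [w] using hle hmk

end Representation

theorem Ideal.span_range_coe_eq_iff {R ι : Type*} [CommRing R] {I : Ideal R} (x : ι → I) :
    Ideal.span (range fun i => (x i : R)) = I ↔ Submodule.span R (range x) = ⊤ := by
  have : Ideal.span (range fun i => (x i : R)) = (Submodule.span R (range x)).map I.subtype := by
    rw [Submodule.map_span, ← range_comp]; rfl
  rw [this, ← (map_injective_of_injective I.injective_subtype).eq_iff, map_subtype_top]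

namespace IsLocalRing

variable {k R : Type*} [Field k] [CommRing R] [IsLocalRing R] [Algebra k R]

instance : IsScalarTower k (ResidueField R) (CotangentSpace R) :=
  .of_algebraMap_smul fun c t => by
    rw [IsScalarTower.algebraMap_apply k R (ResidueField R), algebraMap_smul, algebraMap_smul]

theorem span_toCotangent_image_eq_top_iff [IsNoetherianRing R]
    (hk : Function.Surjective (algebraMap k (ResidueField R))) {s : Set (maximalIdeal R)} :
    span k ((maximalIdeal R).toCotangent '' s) = ⊤ ↔ span R s = ⊤ := by
  rw [← CotangentSpace.span_image_eq_top_iff, ← restrictScalars_span k _ hk,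
    restrictScalars_eq_top_iff]

theorem maximalIdeal_le_comap (σ : R ≃ₐ[k] R) : maximalIdeal R ≤ (maximalIdeal R).comap σ :=
  fun x hx => by simpa [mem_maximalIdeal, mem_nonunits_iff] using hx

variable (k R) in
noncomputable def cotangentRepresentation : Representation k (R ≃ₐ[k] R) (CotangentSpace R) where
  toFun σ := Ideal.mapCotangent _ _ σ.toAlgHom (maximalIdeal_le_comap σ)
  map_one' := by
    ext x
    obtain ⟨x, rfl⟩ := (maximalIdeal R).toCotangent_surjective x
    rfl
  map_mul' σ τ := by
    ext x
    obtain ⟨x, rfl⟩ := (maximalIdeal R).toCotangent_surjective x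
    rfl

variable (R) in
def IsAdmissible {ι : Type*} (G : Subgroup (R ≃ₐ[k] R)) (v : ι → R) : Prop :=
  ∀ σ : ι → G, Ideal.span (range fun i => (σ i : R ≃ₐ[k] R) (v i)) = maximalIdeal R

theorem exists_isAdmissible {p : ℕ} [Fact p.Prime] [CharP k p] [IsNoetherianRing R]
    (hk : Function.Surjective (algebraMap k (ResidueField R))) {n : ℕ} {x : Fin n → R}
    (hx : Ideal.span (range x) = maximalIdeal R) (G : Subgroup (R ≃ₐ[k] R)) [Finite G]
    (hG : IsPGroup p G) : ∃ v : Fin n → R, IsAdmissible R G v := by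
  let x' : Fin n → maximalIdeal R := fun i => ⟨x i, hx ▸ Ideal.subset_span ⟨i, rfl⟩⟩
  have hV : span k (range fun i => (maximalIdeal R).toCotangent (x' i)) = ⊤ := by
    rw [range_comp', span_toCotangent_image_eq_top_iff hk, ← Ideal.span_range_coe_eq_iff]
    exact hx
  have : FiniteDimensional k (CotangentSpace R) :=
    Module.finite_def.2 (hV ▸ fg_span (finite_range _))
  have hdim : Module.finrank k (CotangentSpace R) ≤ n := by
    rw [← finrank_top, ← hV]
    exact (finrank_range_le_card (R := k) _).trans_eq (Fintype.card_fin n)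
  obtain ⟨w, hw_top, hw⟩ := Representation.exists_spanning_family_sub_mem_span_Iio hG n
    ((cotangentRepresentation k R).comp G.subtype) hdim
  choose y hy using fun i => (maximalIdeal R).toCotangent_surjective (w i)
  obtain rfl : w = fun i => (maximalIdeal R).toCotangent (y i) := funext fun i => (hy i).symm
  refine ⟨fun i => y i, fun σ => ?_⟩
  let z : Fin n → maximalIdeal R :=
    fun i => ⟨(σ i : R ≃ₐ[k] R) (y i), maximalIdeal_le_comap _ (y i).2⟩
  rw [Ideal.span_range_coe_eq_iff z, ← span_toCotangent_image_eq_top_iff hk, ← range_comp,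
    eq_top_iff, ← hw_top]
  exact span_range_le_of_sub_mem_span_Iio fun i => hw (σ i) i

end IsLocalRing

open IsLocalRing

namespace MvPowerSeries

variable {σ k : Type*}

theorem mem_span_X_image_of_coeff_eq_zero {R : Type*} [CommRing R] (s : Finset σ)
    {f : MvPowerSeries σ R}
    (hf : ∀ m : σ →₀ ℕ, (∀ i ∈ s, m i = 0) → coeff m f = 0) : f ∈ Ideal.span (X '' s) := by
  classical
  induction s using Finset.induction_on generalizing f with
  | empty => simp [show f = 0 from ext fun m => hf m (by simp)]
  | insert i s _ ih =>
    let g : MvPowerSeries σ R := fun m => if m i = 0 then coeff m f else 0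
    have hg_coeff (m : σ →₀ ℕ) : coeff m g = if m i = 0 then coeff m f else 0 := rfl
    have hg : g ∈ Ideal.span (X '' s) := ih fun m hm => by
      by_cases hmi : m i = 0
      · simpa [hg_coeff, hmi] using hf m (by simpa [hmi] using hm)
      · simp [hg_coeff, hmi]
    obtain ⟨h, hh⟩ : X i ∣ f - g := X_dvd_iff.2 fun m hmi => by simp [hg_coeff, hmi]
    rw [← sub_add_cancel f g, hh]
    refine add_mem (Ideal.mul_mem_right _ _ (Ideal.subset_span ⟨i, by simp, rfl⟩)) ?_
    exact Ideal.span_mono (image_mono (by simp)) hg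

variable [Field k]

theorem mem_maximalIdeal_iff {f : MvPowerSeries σ k} :
    f ∈ maximalIdeal (MvPowerSeries σ k) ↔ constantCoeff f = 0 := by
  simp [mem_maximalIdeal, mem_nonunits_iff, isUnit_iff_constantCoeff]

theorem maximalIdeal_eq_span_range_X [Finite σ] :
    maximalIdeal (MvPowerSeries σ k) = Ideal.span (range X) := by
  have := Fintype.ofFinite σ
  refine le_antisymm (fun f hf => ?_) (Ideal.span_le.2 ?_)
  · rw [← image_univ, ← Finset.coe_univ]
    refine mem_span_X_image_of_coeff_eq_zero _ fun m hm => ?_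
    obtain rfl : m = 0 := by ext i; simpa using hm i
    rwa [mem_maximalIdeal_iff, ← coeff_zero_eq_constantCoeff_apply] at hf
  · rintro _ ⟨i, rfl⟩
    rw [SetLike.mem_coe, mem_maximalIdeal_iff, constantCoeff_X]

theorem algebraMap_residueField_surjective :
    Function.Surjective (algebraMap k (ResidueField (MvPowerSeries σ k))) := by
  intro y
  obtain ⟨f, rfl⟩ := residue_surjective y
  refine ⟨constantCoeff f, ?_⟩
  rw [IsScalarTower.algebraMap_apply k (MvPowerSeries σ k), ResidueField.algebraMap_eq,
    ← sub_eq_zero, ← map_sub, residue_eq_zero_iff, mem_maximalIdeal_iff]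
  simp [← c_eq_algebraMap]

end MvPowerSeries

theorem stmt_2_general (k : Type) [Field k] (p : ℕ) (hp : p.Prime) [CharP k p]
    (n : ℕ)
    (G : Subgroup (MvPowerSeries (Fin n) k ≃ₐ[k] MvPowerSeries (Fin n) k))
    [Finite G] (hG : IsPGroup p G) :
    ∃ v : Fin n → MvPowerSeries (Fin n) k,
      Ideal.span (Set.range v) = IsLocalRing.maximalIdeal (MvPowerSeries (Fin n) k) ∧
      ∀ σ : Fin n → G,
        Ideal.span (Set.range (fun i =>
          (σ i : MvPowerSeries (Fin n) k ≃ₐ[k] MvPowerSeries (Fin n) k) (v i))) =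
        IsLocalRing.maximalIdeal (MvPowerSeries (Fin n) k) := by
  have := Fact.mk hp
  obtain ⟨v, hv⟩ := exists_isAdmissible MvPowerSeries.algebraMap_residueField_surjective
    MvPowerSeries.maximalIdeal_eq_span_range_X.symm G hG
  exact ⟨v, by simpa using hv 1, hv⟩

theorem stmt_2 (k : Type) [Field k] (p : ℕ) (hp : p.Prime) [CharP k p]
    (n : ℕ) (hn : 1 ≤ n)
    (G : Subgroup (MvPowerSeries (Fin n) k ≃ₐ[k] MvPowerSeries (Fin n) k))
    [Finite G] (hG : IsPGroup p G) :
    ∃ v : Fin n → MvPowerSeries (Fin n) k,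
      Ideal.span (Set.range v) = IsLocalRing.maximalIdeal (MvPowerSeries (Fin n) k) ∧
      ∀ σ : Fin n → G,
        Ideal.span (Set.range (fun i =>
          (σ i : MvPowerSeries (Fin n) k ≃ₐ[k] MvPowerSeries (Fin n) k) (v i))) =
        IsLocalRing.maximalIdeal (MvPowerSeries (Fin n) k) :=
  stmt_2_general k p hp n G hG
end

section
/- Let k be a field of characteristic p > 0, A = k[[u]] the formal power series ring in one variable, and σ a k-algebra automorphism of A of order p. Let m ≥ 1 be the ramification break of σ, i.e. the largest integer such that σ induces the identity on A/m_A^{m+1} (equivalently, m + 1 is the order of vanishing of σ(u) − u for any uniformizer u of A). Then p divides m + 1 if and only if there exist a uniformizer t of A and an element a ∈ A fixed by σ such that σ(t) = t + a. -/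
/-!
If `t` is a uniformizer, every `σ a - a` is divisible by `σ t - t`, so `σ t - t` has order
exactly `m + 1`. Writing `σ X = X u` with `ord (u - 1) = m`, one finds
`ord (σ f - f) = ord f + m` whenever `p ∤ ord f`; hence nonzero fixed elements have order
divisible by `p`. Applied to `a = σ t - t` this gives `p ∣ m + 1`.

Conversely, a nonzero trace produces `z, T` with `σ z = z + T` and `T` fixed (additive
Hilbert 90). Multiplying by powers of the fixed element `x = ∏ σ^i X` of order `p` and
subtracting fixed multiples of `T` removes leading terms of order divisible by `p`, until
`p ∤ ord z`; then `ord T = ord z + m`. If `m + 1 = p r`, then `t = x^r z / T` has order `1`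
and `σ t = t + x^r`.
-/

open Finset IsLocalRing PowerSeries

@[to_additive]
theorem Finset.prod_range_succ_eq_of_apply_eq {M : Type*} [CommMonoid M] {f : ℕ → M} {n : ℕ}
    (h : f n = f 0) : ∏ i ∈ range n, f (i + 1) = ∏ i ∈ range n, f i := by
  cases n with
  | zero => simp
  | succ n => rw [prod_range_succ, h, prod_range_succ']

theorem IsLocalRing.map_mem_maximalIdeal_pow_iff {R F : Type*} [CommRing R] [IsLocalRing R]
    [EquivLike F R R] [RingEquivClass F R R] (e : F) {x : R} {n : ℕ} :
    e x ∈ maximalIdeal R ^ n ↔ x ∈ maximalIdeal R ^ n := by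
  conv_lhs => rw [← map_ringEquiv_maximalIdeal (RingEquivClass.toRingEquiv e), ← Ideal.map_pow,
    Ideal.mem_map_of_equiv]
  exact ⟨fun ⟨y, hy, hyx⟩ ↦ EquivLike.injective e hyx ▸ hy, fun hx ↦ ⟨x, hx, rfl⟩⟩

section AlgEquiv

variable {K R : Type*} [CommSemiring K] [CommRing R] [Algebra K R] (σ : R ≃ₐ[K] R) {n : ℕ}

theorem AlgEquiv.map_prod_range_pow_apply (hσ : σ ^ n = 1) (f : R) :
    σ (∏ i ∈ range n, (σ ^ i) f) = ∏ i ∈ range n, (σ ^ i) f := by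
  simp_rw [map_prod, ← AlgEquiv.mul_apply, ← pow_succ']
  exact prod_range_succ_eq_of_apply_eq (f := fun i ↦ (σ ^ i) f) (by simp [hσ])

theorem AlgEquiv.map_sum_range_pow_apply (hσ : σ ^ n = 1) (f : R) :
    σ (∑ i ∈ range n, (σ ^ i) f) = ∑ i ∈ range n, (σ ^ i) f := by
  simp_rw [map_sum, ← AlgEquiv.mul_apply, ← pow_succ']
  exact sum_range_succ_eq_of_apply_eq (f := fun i ↦ (σ ^ i) f) (by simp [hσ])

theorem AlgEquiv.exists_sum_range_pow_apply_ne_zero [IsDomain R] (hn : 0 < orderOf σ) :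
    ∃ θ : R, ∑ i ∈ range (orderOf σ), (σ ^ i) θ ≠ 0 := by
  by_contra! h
  have hinj : Function.Injective fun i : Fin (orderOf σ) ↦ ((σ ^ (i : ℕ) : R ≃ₐ[K] R) : R →* R) :=
    fun i j hij ↦ Fin.ext <| pow_injOn_Iio_orderOf i.2 j.2 <|
      AlgEquiv.ext fun a ↦ (DFunLike.congr_fun hij a :)
  refine one_ne_zero <| Fintype.linearIndependent_iff.mp
    ((linearIndependent_monoidHom R R).comp _ hinj) (fun _ ↦ 1) ?_ ⟨0, hn⟩
  funext θ
  simpa only [Finset.sum_apply, Pi.smul_apply, Function.comp_apply, one_smul, Pi.zero_apply,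
    MonoidHom.coe_coe, ← Fin.sum_univ_eq_sum_range (fun i ↦ (σ ^ i) θ)] using h θ

structure IsArtinSchreierPair (z T : R) : Prop where
  map_fst : σ z = z + T
  map_snd : σ T = T
  snd_ne_zero : T ≠ 0

variable {σ} in
theorem IsArtinSchreierPair.fst_ne_zero {z T : R} (h : IsArtinSchreierPair σ z T) : z ≠ 0 := by
  rintro rfl
  exact h.snd_ne_zero (by simpa using h.map_fst.symm)

/-- If the trace `Tr θ = ∑ σ^i θ` is nonzero, then `y = ∑ i • σ^i θ` satisfies
`σ y = y - Tr θ`. -/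
theorem exists_isArtinSchreierPair [IsDomain R] {p : ℕ} [CharP R p] (hp : 0 < p)
    (hσ : orderOf σ = p) : ∃ z T, IsArtinSchreierPair σ z T := by
  obtain ⟨θ, hθ⟩ := σ.exists_sum_range_pow_apply_ne_zero (hσ ▸ hp)
  rw [hσ] at hθ
  have hσp : σ ^ p = 1 := hσ ▸ pow_orderOf_eq_one σ
  refine ⟨∑ i ∈ range p, i • (σ ^ i) θ, -∑ i ∈ range p, (σ ^ i) θ,
    ⟨?_, by rw [map_neg, σ.map_sum_range_pow_apply hσp], neg_ne_zero.mpr hθ⟩⟩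
  have hshift : ∑ i ∈ range p, (i + 1) • (σ ^ (i + 1)) θ = ∑ i ∈ range p, i • (σ ^ i) θ :=
    sum_range_succ_eq_of_apply_eq (f := fun i ↦ i • (σ ^ i) θ) <| by
      simp only [nsmul_eq_mul, CharP.cast_eq_zero, zero_mul, Nat.cast_zero]
  have hθfix := σ.map_sum_range_pow_apply hσp θ
  rw [map_sum, ← sub_eq_add_neg, ← hshift, ← hθfix, map_sum]
  simp_rw [map_nsmul, ← AlgEquiv.mul_apply, ← pow_succ', succ_nsmul, sum_add_distrib]
  ring

end AlgEquiv

namespace PowerSeries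

variable {k : Type*} [Field k]

theorem mem_maximalIdeal_pow_iff {f : k⟦X⟧} {n : ℕ} :
    f ∈ maximalIdeal k⟦X⟧ ^ n ↔ (n : ℕ∞) ≤ f.order := by
  rw [maximalIdeal_eq_span_X, Ideal.span_singleton_pow, Ideal.mem_span_singleton, X_pow_dvd_iff]
  exact ⟨nat_le_order f n, fun h i hi ↦ coeff_of_lt_order i ((Nat.cast_lt.mpr hi).trans_le h)⟩

theorem order_map_ringEquiv {F : Type*} [EquivLike F k⟦X⟧ k⟦X⟧] [RingEquivClass F k⟦X⟧ k⟦X⟧]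
    (e : F) (f : k⟦X⟧) : (e f).order = f.order :=
  ENat.eq_of_forall_natCast_le_iff fun n ↦ by
    rw [← mem_maximalIdeal_pow_iff, ← mem_maximalIdeal_pow_iff, map_mem_maximalIdeal_pow_iff]

theorem span_singleton_eq_maximalIdeal_pow {f : k⟦X⟧} {n : ℕ} (hf : f.order = n) :
    Ideal.span {f} = maximalIdeal k⟦X⟧ ^ n := by
  have hf0 : f ≠ 0 := order_finite_iff_ne_zero.mp (hf ▸ ENat.natCast_lt_top n)
  rw [maximalIdeal_eq_span_X, Ideal.span_singleton_pow, ← X_pow_order_mul_divXPowOrder (f := f),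
    Ideal.span_singleton_mul_right_unit (isUnit_divided_by_X_pow_order hf0), hf, ENat.toNat_natCast]

theorem dvd_of_order_le {f g : k⟦X⟧} (hf : f ≠ 0) (h : f.order ≤ g.order) : f ∣ g := by
  rw [← Ideal.mem_span_singleton, span_singleton_eq_maximalIdeal_pow (coe_toNat_order hf).symm,
    mem_maximalIdeal_pow_iff, coe_toNat_order hf]
  exact h

theorem exists_lt_order_sub_smul {f g : k⟦X⟧} {n : ℕ} (hf : f.order = n) (hg : g.order = n) :
    ∃ c : k, (n : ℕ∞) < (f - c • g).order := by
  have hgn : coeff n g ≠ 0 := (order_eq_nat.mp hg).1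
  refine ⟨coeff n f / coeff n g, (ENat.add_one_le_iff (ENat.natCast_ne_top n)).mp ?_⟩
  rw [← Nat.cast_add_one]
  refine nat_le_order _ _ fun i hi ↦ ?_
  rcases (Nat.lt_succ_iff.mp hi).lt_or_eq with hi | rfl
  · simp [coeff_of_lt_order i (hf ▸ Nat.cast_lt.mpr hi),
      coeff_of_lt_order i (hg ▸ Nat.cast_lt.mpr hi)]
  · simp [hgn]

theorem order_le_order_of_dvd {f g : k⟦X⟧} (h : f ∣ g) : f.order ≤ g.order := by
  obtain ⟨c, rfl⟩ := h
  rw [order_mul]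
  exact le_self_add

theorem order_pow_sub_one {u : k⟦X⟧} (hu : constantCoeff u = 1) {n : ℕ} (hn : (n : k) ≠ 0) :
    (u ^ n - 1).order = (u - 1).order := by
  have hgeom : (∑ i ∈ range n, u ^ i).order = 0 := by
    have : constantCoeff (∑ i ∈ range n, u ^ i) ≠ 0 := by simpa [map_sum, hu] using hn
    by_contra h
    exact this (order_ne_zero_iff_constCoeff_eq_zero.mp h)
  rw [← geom_sum_mul, order_mul, hgeom, zero_add]

variable (σ : k⟦X⟧ ≃ₐ[k] k⟦X⟧)

theorem order_prod_range_pow_apply_X (n : ℕ) : (∏ i ∈ range n, (σ ^ i) X).order = n := by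
  rw [order_prod]
  simp only [order_map_ringEquiv, order_X, sum_const, card_range, nsmul_one]

theorem map_sub_self_mem_span_sup_pow {t : k⟦X⟧} (ht : Ideal.span {t} = maximalIdeal k⟦X⟧)
    (n : ℕ) (f : k⟦X⟧) : σ f - f ∈ Ideal.span {σ t - t} ⊔ maximalIdeal k⟦X⟧ ^ n := by
  induction n generalizing f with
  | zero => simp
  | succ n ih =>
    obtain ⟨g, hg⟩ : t ∣ f - C (constantCoeff f) := by
      rw [← Ideal.mem_span_singleton, ht, ← ker_coeff_eq_max_ideal, RingHom.mem_ker]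
      simp
    have hf : σ f - f = σ t * (σ g - g) + (σ t - t) * g := by
      conv_lhs => rw [← sub_add_cancel f (C (constantCoeff f)), hg]
      rw [map_add, map_mul, show σ (C _) = C _ from σ.commutes _]
      ring
    have hσt : σ t ∈ maximalIdeal k⟦X⟧ := by
      rw [← pow_one (maximalIdeal _), map_mem_maximalIdeal_pow_iff, pow_one, ← ht]
      exact Ideal.mem_span_singleton_self t
    have hmul := Ideal.mul_mem_mul hσt (ih g)
    rw [Ideal.mul_sup, ← pow_succ'] at hmul
    have hle : maximalIdeal k⟦X⟧ * Ideal.span {σ t - t} ⊔ maximalIdeal k⟦X⟧ ^ (n + 1) ≤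
        Ideal.span {σ t - t} ⊔ maximalIdeal k⟦X⟧ ^ (n + 1) :=
      sup_le_sup_right Ideal.mul_le_right _
    rw [hf]
    exact add_mem (hle hmul)
      (Ideal.mem_sup_left (Ideal.mul_mem_right _ _ (Ideal.mem_span_singleton_self _)))

theorem map_sub_self_dvd_map_sub_self {t : k⟦X⟧} (ht : Ideal.span {t} = maximalIdeal k⟦X⟧)
    (f : k⟦X⟧) : σ t - t ∣ σ f - f := by
  rcases eq_or_ne (σ t - t) 0 with h0 | h0
  · suffices σ f - f = 0 by simp [this]
    rw [← order_eq_top, ENat.eq_top_iff_forall_ge]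
    intro n
    simpa [h0, mem_maximalIdeal_pow_iff] using map_sub_self_mem_span_sup_pow σ ht n f
  · have hspan := span_singleton_eq_maximalIdeal_pow (coe_toNat_order h0).symm
    have := map_sub_self_mem_span_sup_pow σ ht (σ t - t).order.toNat f
    rwa [hspan, sup_idem, ← hspan, Ideal.mem_span_singleton] at this

theorem map_sub_self_eq_X_pow_mul {u : k⟦X⟧} (hu : σ X = X * u) (f : k⟦X⟧) :
    σ f - f = X ^ f.order.toNat * ((u ^ f.order.toNat - 1) * σ f.divXPowOrder +
      (σ f.divXPowOrder - f.divXPowOrder)) := by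
  conv_lhs => rw [← X_pow_order_mul_divXPowOrder (f := f)]
  rw [map_mul, map_pow, hu]
  ring

def IsRamificationBreak (m : ℕ) : Prop :=
  (∀ a, σ a - a ∈ maximalIdeal k⟦X⟧ ^ (m + 1)) ∧ ¬ ∀ a, σ a - a ∈ maximalIdeal k⟦X⟧ ^ (m + 2)

namespace IsRamificationBreak

variable {σ} {m : ℕ} (hσ : IsRamificationBreak σ m)
include hσ

theorem le_order_map_sub_self (a : k⟦X⟧) : ((m + 1 : ℕ) : ℕ∞) ≤ (σ a - a).order :=
  mem_maximalIdeal_pow_iff.mp (hσ.1 a)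

theorem order_map_sub_self_of_span_eq {t : k⟦X⟧} (ht : Ideal.span {t} = maximalIdeal k⟦X⟧) :
    (σ t - t).order = (m + 1 : ℕ) := by
  refine le_antisymm ?_ (hσ.le_order_map_sub_self t)
  by_contra! h
  refine hσ.2 fun a ↦ ?_
  obtain ⟨c, hc⟩ := map_sub_self_dvd_map_sub_self σ ht a
  rw [hc]
  exact Ideal.mul_mem_right _ _ (mem_maximalIdeal_pow_iff.mpr (Order.add_one_le_of_lt h))

variable (hm : 1 ≤ m)
include hm

theorem exists_map_X_eq_X_mul :
    ∃ u : k⟦X⟧, σ X = X * u ∧ (u - 1).order = m ∧ constantCoeff u = 1 := by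
  obtain ⟨u, hu⟩ : X ∣ σ X := by
    rw [X_dvd_iff, ← order_ne_zero_iff_constCoeff_eq_zero, order_map_ringEquiv, order_X]
    exact one_ne_zero
  have hu1 : (u - 1).order = m := by
    have h := hσ.order_map_sub_self_of_span_eq maximalIdeal_eq_span_X.symm
    rw [hu, ← mul_sub_one, order_mul, order_X, add_comm, Nat.cast_add_one] at h
    exact WithTop.add_right_cancel ENat.one_ne_top h
  refine ⟨u, hu, hu1, ?_⟩
  have hu1_ne : (u - 1).order ≠ 0 := by
    rw [hu1]
    exact_mod_cast (by omega : m ≠ 0)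
  have := order_ne_zero_iff_constCoeff_eq_zero.mp hu1_ne
  rwa [map_sub, map_one, sub_eq_zero] at this

theorem le_order_map_sub_self_add (f : k⟦X⟧) : f.order + m ≤ (σ f - f).order := by
  rcases eq_or_ne f 0 with rfl | hf0
  · simp
  obtain ⟨u, hu, hu1, -⟩ := hσ.exists_map_X_eq_X_mul hm
  rw [map_sub_self_eq_X_pow_mul σ hu, order_mul, order_X_pow, coe_toNat_order hf0]
  gcongr
  refine le_trans (le_min ?_ ?_) (min_order_le_order_add _ _)
  · rw [order_mul, ← hu1]
    exact (order_le_order_of_dvd (by simpa using sub_dvd_pow_sub_pow u 1 _)).trans le_self_add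
  · exact (Nat.cast_le.mpr m.le_succ).trans (hσ.le_order_map_sub_self _)

theorem order_map_sub_self {f : k⟦X⟧} {n : ℕ} (hf : f.order = n) (hn : (n : k) ≠ 0) :
    (σ f - f).order = (n + m : ℕ) := by
  have hf0 : f ≠ 0 := order_finite_iff_ne_zero.mp (hf ▸ ENat.natCast_lt_top n)
  obtain ⟨u, hu, hu1, hu0⟩ := hσ.exists_map_X_eq_X_mul hm
  have hmain : ((u ^ n - 1) * σ f.divXPowOrder).order = m := by
    rw [order_mul, order_pow_sub_one hu0 hn, hu1, order_map_ringEquiv,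
      order_zero_of_unit (isUnit_divided_by_X_pow_order hf0), add_zero]
  have hrest : (m : ℕ∞) < (σ f.divXPowOrder - f.divXPowOrder).order :=
    (Nat.cast_lt.mpr m.lt_succ_self).trans_le (hσ.le_order_map_sub_self _)
  rw [map_sub_self_eq_X_pow_mul σ hu, order_mul, order_X_pow, hf, ENat.toNat_natCast,
    order_add_of_order_ne _ _ (hmain ▸ hrest.ne), hmain, min_eq_left hrest.le, Nat.cast_add]

theorem dvd_order_of_map_eq {p : ℕ} [CharP k p] {f : k⟦X⟧} (hfix : σ f = f) {n : ℕ}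
    (hf : f.order = n) : p ∣ n := by
  by_contra h
  have := hσ.order_map_sub_self hm hf ((CharP.cast_eq_zero_iff k p n).not.mpr h)
  rw [hfix, sub_self, order_zero] at this
  exact ENat.top_ne_natCast _ this

end IsRamificationBreak

end PowerSeries

namespace IsArtinSchreierPair

variable {k : Type*} [Field k] {σ : k⟦X⟧ ≃ₐ[k] k⟦X⟧} {z T : k⟦X⟧}

theorem exists_lt_order (h : IsArtinSchreierPair σ z T) {x : k⟦X⟧} (hx : σ x = x) {p : ℕ}
    (hxp : x.order = p) {q s : ℕ} (hz : z.order = (p * q : ℕ)) (hT : T.order = (p * s : ℕ)) :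
    ∃ z', IsArtinSchreierPair σ z' (x ^ s * T) ∧ ((p * s + p * q : ℕ) : ℕ∞) < z'.order := by
  have hx0 : x ≠ 0 := order_finite_iff_ne_zero.mp (hxp ▸ ENat.natCast_lt_top p)
  obtain ⟨c, hc⟩ := exists_lt_order_sub_smul (f := x ^ s * z) (g := x ^ q * T)
    (n := p * s + p * q)
    (by simp only [order_mul, order_pow, hxp, hz, nsmul_eq_mul]; push_cast; ring)
    (by simp only [order_mul, order_pow, hxp, hT, nsmul_eq_mul]; push_cast; ring)
  refine ⟨x ^ s * z - c • (x ^ q * T),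
    ⟨?_, ?_, mul_ne_zero (pow_ne_zero s hx0) h.snd_ne_zero⟩, hc⟩
  · simp only [map_sub, map_smul, map_mul, map_pow, hx, h.map_fst, h.map_snd, mul_add]
    abel
  · rw [map_mul, map_pow, hx, h.map_snd]

theorem exists_not_dvd_order (h : IsArtinSchreierPair σ z T) {m : ℕ}
    (hσ : IsRamificationBreak σ m) (hm : 1 ≤ m) {p : ℕ} [CharP k p] {x : k⟦X⟧} (hx : σ x = x)
    (hxp : x.order = p) :
    ∃ (z' T' : k⟦X⟧) (n : ℕ), IsArtinSchreierPair σ z' T' ∧ z'.order = n ∧ ¬ p ∣ n := by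
  -- Induct on `ord T - ord z`: it is at least `m ≥ 1` and drops whenever `p ∣ ord z`.
  obtain ⟨d, hd⟩ : ∃ d, T.order.toNat - z.order.toNat = d := ⟨_, rfl⟩
  induction d using Nat.strong_induction_on generalizing z T with
  | _ d ih =>
  have hz := coe_toNat_order h.fst_ne_zero
  have hT := coe_toNat_order h.snd_ne_zero
  by_cases hpz : p ∣ z.order.toNat
  swap
  · exact ⟨z, T, _, h, hz.symm, hpz⟩
  obtain ⟨q, hq⟩ := hpz
  obtain ⟨s, hs⟩ := hσ.dvd_order_of_map_eq hm h.map_snd hT.symm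
  obtain ⟨z', h', hlt⟩ := h.exists_lt_order hx hxp (hq ▸ hz.symm) (hs ▸ hT.symm)
  refine ih _ ?_ h' rfl
  have hzT : z.order.toNat + m ≤ T.order.toNat := by
    have := hσ.le_order_map_sub_self_add hm z
    rw [h.map_fst, add_sub_cancel_left, ← hz, ← hT] at this
    exact_mod_cast this
  have hT' : (x ^ s * T).order.toNat = p * s + T.order.toNat := by
    rw [order_mul, order_pow, hxp, ← hT, nsmul_eq_mul, mul_comm]
    norm_cast
  have hz' : p * s + p * q < z'.order.toNat := by
    rw [← coe_toNat_order h'.fst_ne_zero] at hlt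
    exact_mod_cast hlt
  omega

theorem exists_order_eq_one_map_eq_add (h : IsArtinSchreierPair σ z T) {n m : ℕ}
    (hz : z.order = n) (hT : T.order = (n + m : ℕ)) {a : k⟦X⟧} (ha : σ a = a)
    (hao : a.order = (m + 1 : ℕ)) : ∃ t, t.order = 1 ∧ σ t = t + a := by
  have hord : (a * z).order = T.order + 1 := by
    rw [order_mul, hao, hz, hT]
    push_cast
    ring
  obtain ⟨t, ht⟩ := dvd_of_order_le h.snd_ne_zero (hord ▸ le_self_add)
  refine ⟨t, ?_, mul_left_cancel₀ h.snd_ne_zero ?_⟩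
  · rw [ht, order_mul] at hord
    exact WithTop.add_left_cancel (hT ▸ ENat.natCast_ne_top _) hord
  · calc T * σ t = σ (T * t) := by rw [map_mul, h.map_snd]
      _ = T * (t + a) := by
        rw [← ht, map_mul, ha, h.map_fst]
        linear_combination ht

end IsArtinSchreierPair

theorem stmt_7 (k : Type) [Field k] (p : ℕ) (hp : p.Prime) [CharP k p]
    (σ : PowerSeries k ≃ₐ[k] PowerSeries k) (hord : orderOf σ = p)
    (m : ℕ) (hm : 1 ≤ m)
    (hbreak :
      (∀ a : PowerSeries k,
        σ a - a ∈ IsLocalRing.maximalIdeal (PowerSeries k) ^ (m + 1)) ∧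
      ¬ (∀ a : PowerSeries k,
        σ a - a ∈ IsLocalRing.maximalIdeal (PowerSeries k) ^ (m + 2))) :
    p ∣ (m + 1) ↔
      ∃ (t a : PowerSeries k),
        Ideal.span {t} = IsLocalRing.maximalIdeal (PowerSeries k) ∧
        σ a = a ∧ σ t = t + a := by
  have hσ : IsRamificationBreak σ m := hbreak
  set x := ∏ i ∈ range p, (σ ^ i) X
  have hx : σ x = x := σ.map_prod_range_pow_apply (hord ▸ pow_orderOf_eq_one σ) X
  have hxp : x.order = p := order_prod_range_pow_apply_X σ p
  constructor
  · rintro ⟨r, hr⟩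
    have : CharP k⟦X⟧ p := charP_of_injective_algebraMap' k p
    obtain ⟨z, T, h⟩ := exists_isArtinSchreierPair σ hp.pos hord
    obtain ⟨z', T', n, h', hz', hpn⟩ := h.exists_not_dvd_order hσ hm hx hxp
    have hT' : T'.order = (n + m : ℕ) := by
      rw [← add_sub_cancel_left z' T', ← h'.map_fst]
      exact hσ.order_map_sub_self hm hz' ((CharP.cast_eq_zero_iff k p n).not.mpr hpn)
    obtain ⟨t, ht, hσt⟩ := h'.exists_order_eq_one_map_eq_add hz' hT' (a := x ^ r)
      (by rw [map_pow, hx]) (by rw [order_pow, hxp, hr, nsmul_eq_mul, mul_comm]; norm_cast)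
    exact ⟨t, x ^ r, by rw [span_singleton_eq_maximalIdeal_pow ht, pow_one], by rw [map_pow, hx],
      hσt⟩
  · rintro ⟨t, a, ht, ha, hσt⟩
    have hta := hσ.order_map_sub_self_of_span_eq ht
    rw [hσt, add_sub_cancel_left] at hta
    exact hσ.dvd_order_of_map_eq hm ha hta
end
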